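/- For all a, b > 0 with a ≠ b, the Neuman-Sándor mean satisfies M(a,b) < β·G(a,b) + (1−β)·C(a,b) with β = 1 − 1/(2·log(1+√2)), where G(a,b) = √(ab) and C(a,b) = (a²+b²)/(a+b). -/

import Mathlib

noncomputable def NS (a b : ℝ) : ℝ := (a - b) / (2 * Real.arsinh ((a - b) / (a + b)))
noncomputable def Gmean (a b : ℝ) : ℝ := Real.sqrt (a * b)
noncomputable def Cmean (a b : ℝ) : ℝ := (a ^ 2 + b ^ 2) / (a + b)

/-!
With `t = (a - b) / (a + b) ∈ (-1, 1)` the three means are `(a + b) / 2` times the even functions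
`t / arsinh t`, `√(1 - t²)` and `1 + t²` of `t`. Put `L = log (1 + √2) = arsinh 1` and `c = 2L - 1`;
multiplying out by `2L · arsinh t`, the inequality becomes positivity on `(0, 1)` of
`F(t) = (1 + t² + c √(1 - t²)) arsinh t - (c + 1) t`, a function vanishing at `t = 1`.
On `(0, 4/5]` this follows from `arsinh t ≥ t - t³/6`. On `[4/5, 1]` the function `F` is strictly
concave, so it lies strictly above `min (F (4/5)) (F 1) = 0` in between.
The only numerical input is `17/20 < L < 13/14`, from the bounds `1 - 1/x ≤ log x ≤ x - 1`
applied to `x = (1 + √2)/2`, and the decimal bounds on `log 2`.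
-/

open Real Set

theorem Real.arsinh_le_self {x : ℝ} (hx : 0 ≤ x) : arsinh x ≤ x := by
  simpa using arsinh_le_arsinh.2 (self_le_sinh_iff.2 hx)

theorem Real.self_sub_cube_div_six_le_arsinh {x : ℝ} (hx : 0 ≤ x) :
    x - x ^ 3 / 6 ≤ arsinh x := by
  let g : ℝ → ℝ := fun y => arsinh y - (y - y ^ 3 / 6)
  have hg : ∀ y, HasDerivAt g ((√(1 + y ^ 2))⁻¹ - (1 - y ^ 2 / 2)) y := fun y => by
    refine ((hasDerivAt_arsinh y).sub
      ((hasDerivAt_id' y).sub ((hasDerivAt_pow 3 y).div_const 6))).congr_deriv ?_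
    norm_num
    ring
  have hinv_sqrt_ge : ∀ y : ℝ, 1 - y ^ 2 / 2 ≤ (√(1 + y ^ 2))⁻¹ := fun y => by
    have hw : 0 < √(1 + y ^ 2) := by positivity
    have hw2 : √(1 + y ^ 2) ^ 2 = 1 + y ^ 2 := sq_sqrt (by positivity)
    rw [← one_div, le_div_iff₀ hw]
    by_contra! h
    have hp : 0 < 1 - y ^ 2 / 2 := pos_of_mul_pos_left (one_pos.trans h) hw.le
    -- squaring: `(1 - z/2)² (1 + z) = 1 - z² (3 - z) / 4 ≤ 1` for `z = y² < 2`
    have : 1 < (1 - y ^ 2 / 2) ^ 2 * (1 + y ^ 2) := by nlinarith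
    nlinarith [sq_nonneg y, mul_nonneg (sq_nonneg (y ^ 2)) hp.le]
  have hmono : MonotoneOn g (Ici 0) :=
    monotoneOn_of_deriv_nonneg (convex_Ici 0)
      (fun y _ => (hg y).continuousAt.continuousWithinAt)
      (fun y _ => (hg y).differentiableAt.differentiableWithinAt)
      (fun y _ => by rw [(hg y).deriv]; exact sub_nonneg.2 (hinv_sqrt_ge y))
  have := hmono self_mem_Ici hx hx
  simp only [g, arsinh_zero] at this
  linarith

theorem Real.arsinh_one : arsinh 1 = log (1 + √2) := by
  norm_num [arsinh]

theorem Real.log_one_add_sqrt_two_eq : log (1 + √2) = log 2 + log ((1 + √2) / 2) := by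
  rw [← log_mul two_ne_zero (by positivity)]
  ring_nf

theorem Real.log_one_add_sqrt_two_gt : 17 / 20 < log (1 + √2) := by
  have h₁ := one_sub_inv_le_log_of_pos (x := (1 + √2) / 2) (by positivity)
  have h₂ : 1 - ((1 + √2) / 2)⁻¹ = 3 - 2 * √2 := by
    field_simp
    nlinarith [sq_sqrt (show (0 : ℝ) ≤ 2 by norm_num)]
  nlinarith [log_one_add_sqrt_two_eq, log_two_gt_d9, sqrt_nonneg 2,
    sq_sqrt (show (0 : ℝ) ≤ 2 by norm_num)]

theorem Real.log_one_add_sqrt_two_lt : log (1 + √2) < 13 / 14 := by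
  have := log_le_sub_one_of_pos (x := (1 + √2) / 2) (by positivity)
  nlinarith [log_one_add_sqrt_two_eq, log_two_lt_d9, sqrt_nonneg 2,
    sq_sqrt (show (0 : ℝ) ≤ 2 by norm_num)]

theorem hasDerivAt_sqrt_one_sub_sq {t : ℝ} (ht : t ^ 2 < 1) :
    HasDerivAt (fun x => √(1 - x ^ 2)) (-t / √(1 - t ^ 2)) t := by
  refine (((hasDerivAt_pow 2 t).const_sub 1).sqrt (by linarith)).congr_deriv ?_
  field_simp
  ring

theorem hasDerivAt_sqrt_one_add_sq (t : ℝ) :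
    HasDerivAt (fun x => √(1 + x ^ 2)) (t / √(1 + t ^ 2)) t := by
  refine (((hasDerivAt_pow 2 t).const_add 1).sqrt (by positivity)).congr_deriv ?_
  field_simp
  ring

noncomputable def nsGap (c t : ℝ) : ℝ :=
  (1 + t ^ 2 + c * √(1 - t ^ 2)) * arsinh t - (c + 1) * t

noncomputable def nsGapDeriv (c t : ℝ) : ℝ :=
  (2 * t - c * t / √(1 - t ^ 2)) * arsinh t + √(1 + t ^ 2) + c * √(1 - t ^ 2) / √(1 + t ^ 2)
    - (c + 1)

noncomputable def nsGapDeriv2 (c t : ℝ) : ℝ :=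
  (2 - c / √(1 - t ^ 2) ^ 3) * arsinh t + 3 * t / √(1 + t ^ 2)
    - 2 * c * t / (√(1 - t ^ 2) * √(1 + t ^ 2)) - c * t * √(1 - t ^ 2) / √(1 + t ^ 2) ^ 3

theorem continuous_nsGap (c : ℝ) : Continuous (nsGap c) :=
  ((continuous_const.add (continuous_pow 2)).add
    (continuous_const.mul (continuous_const.sub (continuous_pow 2)).sqrt)).mul continuous_arsinh
    |>.sub (continuous_const.mul continuous_id)

theorem hasDerivAt_nsGap (c : ℝ) {t : ℝ} (ht : t ^ 2 < 1) :
    HasDerivAt (nsGap c) (nsGapDeriv c t) t := by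
  have hw2 : √(1 + t ^ 2) ^ 2 = 1 + t ^ 2 := sq_sqrt (by positivity)
  refine (((((hasDerivAt_pow 2 t).const_add 1).add
    ((hasDerivAt_sqrt_one_sub_sq ht).const_mul c)).mul (hasDerivAt_arsinh t)).sub
    ((hasDerivAt_id' t).const_mul (c + 1))).congr_deriv ?_
  rw [nsGapDeriv]
  simp only [Pi.add_apply]
  field_simp
  norm_num
  linear_combination -hw2

theorem hasDerivAt_nsGapDeriv (c : ℝ) {t : ℝ} (ht : t ^ 2 < 1) :
    HasDerivAt (nsGapDeriv c) (nsGapDeriv2 c t) t := by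
  have hu2 : √(1 - t ^ 2) ^ 2 = 1 - t ^ 2 := sq_sqrt (by linarith)
  have hu : 0 < √(1 - t ^ 2) := sqrt_pos.2 (by linarith)
  have hw : 0 < √(1 + t ^ 2) := by positivity
  have hu' := hasDerivAt_sqrt_one_sub_sq ht
  have hw' := hasDerivAt_sqrt_one_add_sq t
  refine (((((hasDerivAt_id' t).const_mul 2).sub
    (((hasDerivAt_id' t).const_mul c).div hu' hu.ne')).mul (hasDerivAt_arsinh t)).add hw'
    |>.add ((hu'.const_mul c).div hw' hw.ne') |>.sub_const (c + 1)).congr_deriv ?_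
  rw [nsGapDeriv2]
  simp only [Pi.sub_apply, Pi.div_apply]
  field_simp
  linear_combination (-c * arsinh t * √(1 + t ^ 2) ^ 3) * hu2

theorem nsGapDeriv2_neg {c t : ℝ} (hc : 7 / 10 < c) (ht₀ : 4 / 5 < t) (ht₁ : t < 1) :
    nsGapDeriv2 c t < 0 := by
  have hu2 : √(1 - t ^ 2) ^ 2 = 1 - t ^ 2 := sq_sqrt (by nlinarith)
  have hw2 : √(1 + t ^ 2) ^ 2 = 1 + t ^ 2 := sq_sqrt (by positivity)
  have hu : 0 < √(1 - t ^ 2) := sqrt_pos.2 (by nlinarith)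
  have hw : 0 < √(1 + t ^ 2) := by positivity
  have hs_le : arsinh t ≤ t := arsinh_le_self (by linarith)
  have hs_ge : t - t ^ 3 / 6 ≤ arsinh t := self_sub_cube_div_six_le_arsinh (by linarith)
  rw [nsGapDeriv2]
  set u := √(1 - t ^ 2)
  set w := √(1 + t ^ 2)
  set s := arsinh t
  have hu_lt : u < 3 / 5 := by nlinarith
  have hw_gt : 32 / 25 < w := by nlinarith
  have hw_lt : w < 10 / 7 := by nlinarith
  have hcore : u ^ 3 * (2 * w + 3) < c * ((1 - t ^ 2 / 6) * w + 2 * u ^ 2) := by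
    have h₁ : u ^ 3 * (2 * w + 3) ≤ 3 / 5 * u ^ 2 * (2 * (10 / 7) + 3) := by
      apply mul_le_mul (by nlinarith) (by linarith) (by positivity) (by positivity)
    have h₂ : 7 / 10 * ((1 - t ^ 2 / 6) * (32 / 25) + 2 * u ^ 2)
        < c * ((1 - t ^ 2 / 6) * w + 2 * u ^ 2) := by
      apply mul_lt_mul hc _ (by nlinarith) (by linarith)
      nlinarith
    nlinarith
  have key : 2 * s * u ^ 3 * w ^ 3 + 3 * t * u ^ 3 * w ^ 2
      < c * (s * w ^ 3 + 2 * t * u ^ 2 * w ^ 2 + t * u ^ 4) :=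
    calc 2 * s * u ^ 3 * w ^ 3 + 3 * t * u ^ 3 * w ^ 2
        ≤ t * w ^ 2 * (u ^ 3 * (2 * w + 3)) := by
          nlinarith [mul_le_mul_of_nonneg_right hs_le (by positivity : (0 : ℝ) ≤ u ^ 3 * w ^ 3)]
      _ < t * w ^ 2 * (c * ((1 - t ^ 2 / 6) * w + 2 * u ^ 2)) := by gcongr
      _ ≤ c * (s * w ^ 3 + 2 * t * u ^ 2 * w ^ 2 + t * u ^ 4) := by
          nlinarith [mul_le_mul_of_nonneg_right hs_ge (by positivity : (0 : ℝ) ≤ c * w ^ 3),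
            (by positivity : (0 : ℝ) ≤ c * t * u ^ 4)]
  have hden : 0 < u ^ 3 * w ^ 3 := by positivity
  rw [← neg_pos, ← mul_pos_iff_of_pos_right hden]
  field_simp
  linear_combination key

theorem strictConcaveOn_nsGap {c : ℝ} (hc : 7 / 10 < c) :
    StrictConcaveOn ℝ (Icc (4 / 5) 1) (nsGap c) := by
  refine strictConcaveOn_of_deriv2_neg (convex_Icc _ _) (continuous_nsGap c).continuousOn ?_
  rw [interior_Icc]
  rintro t ⟨ht₀, ht₁⟩
  have hsq : t ^ 2 < 1 := by nlinarith
  have hderiv : deriv (nsGap c) =ᶠ[nhds t] nsGapDeriv c := by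
    filter_upwards [Ioo_mem_nhds (show -1 < t by linarith) ht₁] with x hx
    exact (hasDerivAt_nsGap c (by nlinarith [hx.1, hx.2])).deriv
  rw [Function.iterate_succ_apply', Function.iterate_one, hderiv.deriv_eq,
    (hasDerivAt_nsGapDeriv c hsq).deriv]
  exact nsGapDeriv2_neg hc ht₀ ht₁

theorem nsGap_pos_of_le {c t : ℝ} (hc₀ : 0 ≤ c) (hc : c ≤ 6 / 7) (ht₀ : 0 < t) (ht : t ≤ 4 / 5) :
    0 < nsGap c t := by
  have hu2 : √(1 - t ^ 2) ^ 2 = 1 - t ^ 2 := sq_sqrt (by nlinarith)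
  have hs_ge : t - t ^ 3 / 6 ≤ arsinh t := self_sub_cube_div_six_le_arsinh ht₀.le
  rw [nsGap]
  set u := √(1 - t ^ 2)
  have hu_ge : 3 / 5 ≤ u := by nlinarith [sqrt_nonneg (1 - t ^ 2)]
  have hu_lt : u < 1 := by nlinarith
  have hA : 0 < 1 + t ^ 2 + c * u := by positivity
  -- at `c = 6/7` the bracket below factors; it is decreasing in `c`
  have hfactor : (1 + t ^ 2) * (1 - t ^ 2 / 6) - 1 + 6 / 7 * (u * (1 - t ^ 2 / 6) - 1)
      = (1 - u) * (7 * u ^ 3 + u ^ 2 + 22 * u - 8) / 42 := by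
    linear_combination (2 / 3 - u / 7 + u ^ 2 / 6 - t ^ 2 / 6) * hu2
  have hbracket : 0 < (1 + t ^ 2 + c * u) * (1 - t ^ 2 / 6) - (c + 1) := by
    have : 0 < (1 - u) * (7 * u ^ 3 + u ^ 2 + 22 * u - 8) / 42 := by
      have : 0 < 7 * u ^ 3 + u ^ 2 + 22 * u - 8 := by nlinarith
      have : 0 < 1 - u := by linarith
      positivity
    nlinarith [mul_le_mul_of_nonneg_right hc (show 0 ≤ 1 - u * (1 - t ^ 2 / 6) by nlinarith)]
  calc 0 < t * ((1 + t ^ 2 + c * u) * (1 - t ^ 2 / 6) - (c + 1)) := mul_pos ht₀ hbracket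
    _ = (1 + t ^ 2 + c * u) * (t - t ^ 3 / 6) - (c + 1) * t := by ring
    _ ≤ (1 + t ^ 2 + c * u) * arsinh t - (c + 1) * t := by gcongr

theorem nsGap_pos {c t : ℝ} (hc_gt : 7 / 10 < c) (hc_le : c ≤ 6 / 7) (h₁ : 0 ≤ nsGap c 1)
    (ht₀ : 0 < t) (ht₁ : t < 1) : 0 < nsGap c t := by
  rcases le_or_gt t (4 / 5) with ht | ht
  · exact nsGap_pos_of_le (by linarith) hc_le ht₀ ht
  · have h₀ : 0 < nsGap c (4 / 5) := nsGap_pos_of_le (by linarith) hc_le (by norm_num) le_rfl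
    have := (strictConcaveOn_nsGap hc_gt).lt_on_openSegment (x := 4 / 5) (y := 1) (by norm_num)
      (by norm_num) (by norm_num) (by rw [openSegment_eq_Ioo (by norm_num)]; exact ⟨ht, ht₁⟩)
    exact (le_min h₀.le h₁).trans_lt this

theorem nsGap_one_eq_zero : nsGap (2 * log (1 + √2) - 1) 1 = 0 := by
  norm_num [nsGap, arsinh_one]

theorem div_arsinh_lt_of_pos {t : ℝ} (ht₀ : 0 < t) (ht₁ : t < 1) :
    t / arsinh t < (1 - 1 / (2 * log (1 + √2))) * √(1 - t ^ 2)
      + (1 - (1 - 1 / (2 * log (1 + √2)))) * (1 + t ^ 2) := by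
  have hL := log_one_add_sqrt_two_gt
  have hs : 0 < arsinh t := arsinh_pos_iff.2 ht₀
  have hF := nsGap_pos (by linarith) (by linarith [log_one_add_sqrt_two_lt])
    nsGap_one_eq_zero.ge ht₀ ht₁
  rw [nsGap] at hF
  rw [div_lt_iff₀ hs]
  field_simp
  nlinarith

theorem div_arsinh_lt {t : ℝ} (ht₀ : t ≠ 0) (ht₁ : |t| < 1) :
    t / arsinh t < (1 - 1 / (2 * log (1 + √2))) * √(1 - t ^ 2)
      + (1 - (1 - 1 / (2 * log (1 + √2)))) * (1 + t ^ 2) := by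
  rcases ht₀.lt_or_gt with ht | ht
  · have := div_arsinh_lt_of_pos (neg_pos.2 ht) (by linarith [neg_abs_le t])
    rwa [arsinh_neg, neg_div_neg_eq, neg_sq] at this
  · exact div_arsinh_lt_of_pos ht (lt_of_abs_lt ht₁)

theorem NS_eq {a b : ℝ} (hab : 0 < a + b) :
    NS a b = (a + b) / 2 * ((a - b) / (a + b) / arsinh ((a - b) / (a + b))) := by
  rw [NS]
  field_simp

theorem Gmean_eq {a b : ℝ} (hab : 0 < a + b) :
    Gmean a b = (a + b) / 2 * √(1 - ((a - b) / (a + b)) ^ 2) := by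
  rw [Gmean, ← sqrt_sq (by positivity : 0 ≤ (a + b) / 2), ← sqrt_mul (by positivity)]
  congr 1
  field_simp
  ring

theorem Cmean_eq {a b : ℝ} (hab : 0 < a + b) :
    Cmean a b = (a + b) / 2 * (1 + ((a - b) / (a + b)) ^ 2) := by
  rw [Cmean]
  field_simp
  ring

theorem stmt1 (a b : ℝ) (ha : 0 < a) (hb : 0 < b) (hab : a ≠ b) :
    NS a b < (1 - 1 / (2 * Real.log (1 + Real.sqrt 2))) * Gmean a b +
      (1 - (1 - 1 / (2 * Real.log (1 + Real.sqrt 2)))) * Cmean a b := by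
  have hsum : 0 < a + b := by positivity
  have ht₀ : (a - b) / (a + b) ≠ 0 := div_ne_zero (sub_ne_zero.2 hab) hsum.ne'
  have ht₁ : |(a - b) / (a + b)| < 1 := by
    rw [abs_div, abs_of_pos hsum, div_lt_one hsum, abs_sub_lt_iff]
    constructor <;> linarith
  rw [NS_eq hsum, Gmean_eq hsum, Cmean_eq hsum]
  linear_combination mul_lt_mul_of_pos_left (div_arsinh_lt ht₀ ht₁) (half_pos hsum)
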